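/- Let G be a (1/2,λ)-pseudo-random graph, and let P and W be disjoint vertex subsets such that every vertex of P has more than (1/2 + δ)|W| neighbors in W. Then |P| < λ²/(δ²|W|). -/

import Mathlib

/-!
Averaging the degrees gives d(P, W) > 1/2 + δ, so pseudo-randomness of the pair (P, W) forces
δ < λ / √(|P||W|); squaring gives δ²|P||W| < λ².
-/

open Finset

namespace Rel

variable {α β : Type*} (r : α → β → Prop) [∀ a, DecidablePred (r a)]

theorem card_interedges_eq_sum_card_filter (s : Finset α) (t : Finset β) :
    #(interedges r s t) = ∑ a ∈ s, #{b ∈ t | r a b} := by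
  rw [interedges, card_filter, sum_product]
  simp only [card_filter]

variable {r}

theorem lt_edgeDensity_of_forall_lt_card_filter {s : Finset α} {t : Finset β} {c : ℝ}
    (hs : s.Nonempty) (h : ∀ a ∈ s, c * #t < #{b ∈ t | r a b}) :
    c < (edgeDensity r s t : ℝ) := by
  have ht : t.Nonempty := by
    obtain ⟨a, ha⟩ := hs
    rw [nonempty_iff_ne_empty]
    rintro rfl
    simpa using h a ha
  have hsum : c * (#s * #t) < ∑ a ∈ s, (#{b ∈ t | r a b} : ℝ) :=
    calc c * (#s * #t) = ∑ _a ∈ s, c * #t := by rw [sum_const, nsmul_eq_mul]; ring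
      _ < _ := sum_lt_sum_of_nonempty hs h
  have hst : (0 : ℝ) < #s * #t := by positivity
  rw [edgeDensity, Rat.cast_div, lt_div_iff₀ (by exact_mod_cast hst)]
  push_cast
  rwa [card_interedges_eq_sum_card_filter, Nat.cast_sum]

end Rel

theorem sq_mul_lt_sq_of_lt_div_sqrt {δ lam x : ℝ} (hδ : 0 ≤ δ) (hx : 0 < x)
    (h : δ < lam / √x) : δ ^ 2 * x < lam ^ 2 := by
  have hlt : δ * √x < lam := (lt_div_iff₀ (Real.sqrt_pos.2 hx)).1 h
  calc δ ^ 2 * x = (δ * √x) ^ 2 := by rw [mul_pow, Real.sq_sqrt hx.le]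
    _ < lam ^ 2 := pow_lt_pow_left₀ hlt (by positivity) two_ne_zero

theorem pseudorandom_few_high_degree_general {V : Type}
    (G : SimpleGraph V) [DecidableRel G.Adj] (lam δ : ℝ) (hδ : 0 < δ)
    (hpr : ∀ A B : Finset V, Disjoint A B → A.Nonempty → B.Nonempty →
      |(G.edgeDensity A B : ℝ) - 1 / 2| ≤ lam / Real.sqrt ((A.card : ℝ) * B.card))
    (P W : Finset V) (hPW : Disjoint P W) (hP : P.Nonempty) (hW : W.Nonempty)
    (hdeg : ∀ v ∈ P, (1 / 2 + δ) * W.card < ((W.filter (G.Adj v)).card : ℝ)) :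
    (P.card : ℝ) < lam ^ 2 / (δ ^ 2 * W.card) := by
  have hdense : 1 / 2 + δ < (G.edgeDensity P W : ℝ) :=
    Rel.lt_edgeDensity_of_forall_lt_card_filter hP hdeg
  have hgap : δ < lam / √((#P : ℝ) * #W) :=
    calc δ < (G.edgeDensity P W : ℝ) - 1 / 2 := by linarith
      _ ≤ |(G.edgeDensity P W : ℝ) - 1 / 2| := le_abs_self _
      _ ≤ _ := hpr P W hPW hP hW
  have hsq := sq_mul_lt_sq_of_lt_div_sqrt hδ.le (by positivity) hgap
  rw [lt_div_iff₀ (by positivity)]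
  linarith

/-- In a (1/2,λ)-pseudo-random graph, if every vertex of P has more than
(1/2 + δ)|W| neighbors in the disjoint set W, then |P| < λ²/(δ²|W|). -/
theorem pseudorandom_few_high_degree {V : Type} [Fintype V] [DecidableEq V]
    (G : SimpleGraph V) [DecidableRel G.Adj] (lam δ : ℝ) (hδ : 0 < δ)
    (hpr : ∀ A B : Finset V, Disjoint A B → A.Nonempty → B.Nonempty →
      |(G.edgeDensity A B : ℝ) - 1 / 2| ≤ lam / Real.sqrt ((A.card : ℝ) * B.card))
    (P W : Finset V) (hPW : Disjoint P W) (hP : P.Nonempty) (hW : W.Nonempty)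
    (hdeg : ∀ v ∈ P, (1 / 2 + δ) * W.card < ((W.filter (G.Adj v)).card : ℝ)) :
    (P.card : ℝ) < lam ^ 2 / (δ ^ 2 * W.card) :=
  pseudorandom_few_high_degree_general G lam δ hδ hpr P W hPW hP hW hdeg
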